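/- Let f : A → B be a homomorphism of abelian groups with finite kernel, and let S ⊆ B. Suppose f⁻¹(S ∩ im f) is a finite union of torsion translates of subgroups of A, and every element of ker f is torsion. If moreover S ⊆ im f, then S is a finite union of torsion translates of subgroups of B. -/
import Mathlib


open scoped Pointwise

/-- Let `f : A → B` be a homomorphism of abelian groups with finite kernel,
and `S ⊆ B`. Suppose `f⁻¹(S ∩ im f)` is a finite union of torsion translates of subgroups
of `A`, and every element of `ker f` is torsion. If moreover `S ⊆ im f`, then `S` is a
finite union of torsion translates of subgroups of `B`. -/
theorem descend_torsion_cosets_along_finite_kernel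
    {A B : Type*} [CommGroup A] [CommGroup B] (f : A →* B)
    (hker : Finite f.ker) (S : Set B)
    (n : ℕ) (ρ : Fin n → A) (H : Fin n → Subgroup A)
    (hρ : ∀ i, IsOfFinOrder (ρ i))
    (hpre : f ⁻¹' (S ∩ Set.range f) = ⋃ i, ρ i • (H i : Set A))
    (htor : ∀ a ∈ f.ker, IsOfFinOrder a)
    (hS : S ⊆ Set.range f) :
    ∃ (m : ℕ) (σ : Fin m → B) (K : Fin m → Subgroup B),
      (∀ i, IsOfFinOrder (σ i)) ∧ S = ⋃ i, σ i • (K i : Set B) := by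
  refine ⟨n, fun i => f (ρ i), fun i => (H i).map f, fun i => f.isOfFinOrder (hρ i), ?_⟩
  have h1 : f '' (f ⁻¹' (S ∩ Set.range f)) = S := by
    rw [Set.image_preimage_eq_inter_range, Set.inter_assoc, Set.inter_self,
      Set.inter_eq_left.mpr hS]
  rw [← h1, hpre, Set.image_iUnion]
  refine Set.iUnion_congr fun i => ?_
  ext b
  simp only [Set.mem_image, Set.mem_smul_set, Subgroup.mem_map, SetLike.mem_coe,
    Subgroup.coe_map]
  constructor
  · rintro ⟨a, ⟨h, hh, rfl⟩, rfl⟩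
    exact ⟨f h, ⟨h, hh, rfl⟩, by simp [smul_eq_mul, map_mul]⟩
  · rintro ⟨y, ⟨h, hh, rfl⟩, rfl⟩
    exact ⟨ρ i * h, ⟨h, hh, rfl⟩, by simp [smul_eq_mul, map_mul]⟩
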